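/- Let α > 0 and β > 1, let m = m(β) be the unique strictly positive solution of tanh(βm) = m, and let ν_N be the de Finetti measure. Then for every ℓ ∈ ℕ there exists a constant C_ℓ > 0 such that for all N ∈ ℕ: ∫_{m/2}^{1} |t − m|^ℓ dν_N(t) ≤ C_ℓ·N^{−αℓ/2}. -/

import Mathlib

open MeasureTheory Real Filter Set
open scoped ENNReal Topology

/-- The function `F_β`. -/
noncomputable def Fbeta (β t : ℝ) : ℝ :=
  1 / β * (1 / 2 * Real.log ((1 + t) / (1 - t))) ^ 2 + Real.log (1 - t ^ 2)

/-- The normalizing constant `Z_N = ∫_{-1}^1 e^{-x F_β(t)/2}/(1-t²) dt` (with `x = N^α`). -/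
noncomputable def Zconst (β x : ℝ) : ℝ :=
  ∫ t in Set.Ioo (-1 : ℝ) 1, Real.exp (-(x * Fbeta β t) / 2) / (1 - t ^ 2)

/-- The de Finetti measure `ν_N` with density proportional to `e^{-N^α F_β(t)/2}/(1-t²)`. -/
noncomputable def nuN (α β : ℝ) (N : ℕ) : Measure ℝ :=
  (ENNReal.ofReal (Zconst β ((N : ℝ) ^ α)))⁻¹ •
    ((volume.restrict (Set.Ioo (-1 : ℝ) 1)).withDensity fun t =>
      ENNReal.ofReal (Real.exp (-((N : ℝ) ^ α * Fbeta β t) / 2) / (1 - t ^ 2)))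

/-!
Substituting `t = tanh u` turns `ν_N` into the measure on `ℝ` with density proportional to
`exp (-x G(u) / 2)`, where `x = N^α` and `G(u) = u²/β - 2 log cosh u = F_β (tanh u)`, and the
moment into `∫_{u ≥ artanh (m/2)} |tanh u - m|^ℓ exp (-x G(u) / 2) du`. The point `p = βm` is
critical for `G`. Since `G' = 2 (u/β - tanh u)` and `tanh` is increasing, `G(u) ≤ G(p) + (u-p)²/β`
everywhere; since `tanh` is strictly concave on `[0, ∞)`, its secant slopes through `p` are smaller
than the slope `1/β` of the chord from `0` to `p`, which gives `G(u) ≥ G(p) + c (u-p)²` with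
`c > 0` for `u ≥ artanh (m/2)`. As `tanh` is `1`-Lipschitz, the numerator is then at most
`exp (-x G(p) / 2)` times a Gaussian moment of size `x^{-(ℓ+1)/2}`, while the normalising constant
is at least `exp (-x G(p) / 2)` times a multiple of `x^{-1/2}`.
-/

namespace Real

theorem one_sub_tanh_sq (x : ℝ) : 1 - tanh x ^ 2 = (cosh x ^ 2)⁻¹ := by
  have h := cosh_sq_sub_sinh_sq x
  rw [tanh_eq_sinh_div_cosh, div_pow]
  field_simp [(cosh_pos x).ne']
  linarith

theorem hasDerivAt_tanh (x : ℝ) : HasDerivAt tanh (1 - tanh x ^ 2) x := by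
  have h := (hasDerivAt_sinh x).div (hasDerivAt_cosh x) (cosh_pos x).ne'
  have htanh : sinh / cosh = tanh := funext fun y => (tanh_eq_sinh_div_cosh y).symm
  rw [htanh] at h
  refine h.congr_deriv ?_
  rw [tanh_eq_sinh_div_cosh]
  field_simp [(cosh_pos x).ne']

theorem continuous_tanh : Continuous tanh :=
  continuous_iff_continuousAt.2 fun x => (hasDerivAt_tanh x).continuousAt

theorem tanh_strictMono : StrictMono tanh :=
  strictMono_of_deriv_pos fun x => by
    rw [(hasDerivAt_tanh x).deriv]
    linarith [tanh_sq_lt_one x]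

theorem abs_tanh_sub_tanh_le (x y : ℝ) : |tanh x - tanh y| ≤ |x - y| := by
  have hlip : LipschitzWith 1 tanh :=
    lipschitzWith_of_nnnorm_deriv_le (fun x => (hasDerivAt_tanh x).differentiableAt) fun x => by
      rw [(hasDerivAt_tanh x).deriv, ← NNReal.coe_le_coe, coe_nnnorm, norm_eq_abs, NNReal.coe_one,
        abs_le]
      constructor <;> nlinarith [tanh_sq_lt_one x]
  simpa [dist_eq] using hlip.dist_le_mul x y

theorem strictConcaveOn_tanh : StrictConcaveOn ℝ (Ici 0) tanh := by
  refine StrictAntiOn.strictConcaveOn_of_deriv (convex_Ici 0) continuous_tanh.continuousOn ?_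
  rw [interior_Ici]
  intro x hx y hy hxy
  rw [(hasDerivAt_tanh x).deriv, (hasDerivAt_tanh y).deriv]
  have hx0 : 0 < tanh x := tanh_zero ▸ tanh_strictMono hx
  nlinarith [tanh_strictMono hxy]

theorem image_tanh_Ici (a : ℝ) : tanh '' Ici a = Ico (tanh a) 1 := by
  ext t
  constructor
  · rintro ⟨u, hu, rfl⟩
    exact ⟨tanh_strictMono.monotone hu, tanh_lt_one u⟩
  · rintro ⟨hat, ht1⟩
    have ht : t ∈ Ioo (-1) 1 := ⟨(neg_one_lt_tanh a).trans_le hat, ht1⟩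
    refine ⟨artanh t, ?_, tanh_artanh ht⟩
    rw [mem_Ici, ← tanh_strictMono.le_iff_le, tanh_artanh ht]
    exact hat

theorem log_cosh_le_abs (x : ℝ) : log (cosh x) ≤ |x| := by
  rw [← cosh_abs, log_le_iff_le_exp (cosh_pos _), cosh_eq]
  have : exp (-|x|) ≤ exp |x| := exp_le_exp.2 (by linarith [abs_nonneg x])
  linarith

theorem integral_image_tanh {s : Set ℝ} (hs : MeasurableSet s) (g : ℝ → ℝ) :
    ∫ t in tanh '' s, g t / (1 - t ^ 2) = ∫ u in s, g (tanh u) := by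
  rw [integral_image_eq_integral_abs_deriv_smul hs
    (fun u _ => (hasDerivAt_tanh u).hasDerivWithinAt) tanh_strictMono.injective.injOn]
  refine setIntegral_congr_fun hs fun u _ => ?_
  have h : 0 < 1 - tanh u ^ 2 := by linarith [tanh_sq_lt_one u]
  rw [smul_eq_mul, abs_of_pos h, mul_div_cancel₀ _ h.ne']

end Real

theorem isMinOn_of_hasDerivAt_of_mul_sub_nonneg {f f' : ℝ → ℝ} {s : Set ℝ} {p : ℝ}
    (hs : s.OrdConnected) (hp : p ∈ s) (hf : ∀ u ∈ s, HasDerivAt f (f' u) u)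
    (hf' : ∀ u ∈ s, 0 ≤ f' u * (u - p)) : IsMinOn f s p := by
  intro u hu
  have hcont {a b} (ha : a ∈ s) (hb : b ∈ s) : ContinuousOn f (Icc a b) :=
    fun v hv => (hf v (hs.out ha hb hv)).continuousAt.continuousWithinAt
  have hdiff {a b} (ha : a ∈ s) (hb : b ∈ s) : DifferentiableOn ℝ f (interior (Icc a b)) :=
    fun v hv => (hf v (hs.out ha hb (interior_subset hv))).differentiableAt.differentiableWithinAt
  have hderiv {a b v} (ha : a ∈ s) (hb : b ∈ s) (hv : v ∈ interior (Icc a b)) :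
      0 ≤ deriv f v * (v - p) := by
    have hvs := hs.out ha hb (interior_subset hv)
    rw [(hf v hvs).deriv]
    exact hf' v hvs
  rcases le_total p u with hpu | hup
  · refine monotoneOn_of_deriv_nonneg (convex_Icc p u) (hcont hp hu) (hdiff hp hu)
      (fun v hv => nonneg_of_mul_nonneg_left (hderiv hp hu hv) ?_)
      (left_mem_Icc.2 hpu) (right_mem_Icc.2 hpu) hpu
    rw [interior_Icc] at hv
    exact sub_pos.2 hv.1
  · refine antitoneOn_of_deriv_nonpos (convex_Icc u p) (hcont hu hp) (hdiff hu hp)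
      (fun v hv => nonpos_of_mul_nonneg_left (hderiv hu hp hv) ?_)
      (left_mem_Icc.2 hup) (right_mem_Icc.2 hup) hup
    rw [interior_Icc] at hv
    exact sub_neg.2 hv.2

noncomputable def Gbeta (β u : ℝ) : ℝ := u ^ 2 / β - 2 * log (cosh u)

theorem Fbeta_tanh (β u : ℝ) : Fbeta β (tanh u) = Gbeta β u := by
  rw [Fbeta, ← artanh_eq_half_log ⟨(neg_one_lt_tanh u).le, (tanh_lt_one u).le⟩, artanh_tanh,
    one_sub_tanh_sq, log_inv, log_pow, Gbeta]
  push_cast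
  ring

theorem hasDerivAt_Gbeta (β u : ℝ) : HasDerivAt (Gbeta β) (2 * (u / β - tanh u)) u := by
  have hlog : HasDerivAt (fun u => log (cosh u)) (tanh u) u := by
    simpa [← tanh_eq_sinh_div_cosh] using (hasDerivAt_cosh u).log (cosh_pos u).ne'
  refine (((hasDerivAt_pow 2 u).div_const β).sub (hlog.const_mul 2)).congr_deriv ?_
  push_cast
  ring

@[fun_prop]
theorem continuous_Gbeta (β : ℝ) : Continuous (Gbeta β) :=
  continuous_iff_continuousAt.2 fun u => (hasDerivAt_Gbeta β u).continuousAt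

theorem sq_div_sub_le_Gbeta {β : ℝ} (hβ : 0 < β) (u : ℝ) : u ^ 2 / (2 * β) - 2 * β ≤ Gbeta β u := by
  have hAMGM : 2 * |u| ≤ u ^ 2 / (2 * β) + 2 * β := by
    rw [← sq_abs u, div_add' _ _ _ (by positivity), le_div_iff₀ (by positivity)]
    nlinarith [sq_nonneg (|u| - 2 * β)]
  have h : u ^ 2 / β = 2 * (u ^ 2 / (2 * β)) := by field_simp
  rw [Gbeta]
  linarith [log_cosh_le_abs u]

theorem integrable_exp_neg_mul_Gbeta {β x : ℝ} (hβ : 0 < β) (hx : 0 < x) :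
    Integrable fun u => exp (-(x * Gbeta β u) / 2) := by
  refine ((integrable_exp_neg_mul_sq (by positivity : 0 < x / (4 * β))).const_mul
    (exp (x * β))).mono' (by fun_prop) (Eventually.of_forall fun u => ?_)
  rw [norm_of_nonneg (exp_pos _).le, ← exp_add]
  refine exp_le_exp.2 ?_
  have h := mul_le_mul_of_nonneg_left (sq_div_sub_le_Gbeta hβ u) hx.le
  have e : x * (u ^ 2 / (2 * β) - 2 * β) = 2 * (x / (4 * β) * u ^ 2) - 2 * (x * β) := by
    field_simp; ring
  linarith

theorem Gbeta_le_add_sq {β p : ℝ} (hp : tanh p = p / β) (u : ℝ) :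
    Gbeta β u ≤ Gbeta β p + β⁻¹ * (u - p) ^ 2 := by
  have hmin := isMinOn_of_hasDerivAt_of_mul_sub_nonneg
    (f := fun u => β⁻¹ * (u - p) ^ 2 - Gbeta β u)
    (f' := fun u => 2 * (tanh u - tanh p)) ordConnected_univ (mem_univ p)
    (fun u _ => by
      refine ((((hasDerivAt_id' u).sub_const p).pow 2).const_mul β⁻¹ |>.sub
        (hasDerivAt_Gbeta β u)).congr_deriv ?_
      rw [hp]; push_cast; ring)
    (fun u _ => by rcases le_total u p with h | h <;> nlinarith [tanh_strictMono.monotone h])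
  have h := isMinOn_iff.1 hmin u (mem_univ u)
  beta_reduce at h
  linarith

-- The chord of `tanh` from `0` to `p` has slope `tanh p / p = 1 / β`.
theorem tanh_secant_lt_inv {β a p : ℝ} (hp : tanh p = p / β) (ha : 0 < a) (hap : a < p) :
    (tanh p - tanh a) / (p - a) < 1 / β := by
  have h := strictConcaveOn_tanh.secant_strict_mono (ha.le.trans hap.le) (mem_Ici.2 le_rfl) ha.le
    (ha.trans hap).ne hap.ne ha
  rw [← neg_div_neg_eq, neg_sub, neg_sub] at h
  refine h.trans_eq ?_
  rw [tanh_zero, hp]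
  field_simp [(ha.trans hap).ne']
  ring

theorem tanh_sub_mul_sub_le {a p v : ℝ} (ha : 0 ≤ a) (hap : a < p) (hv : a ≤ v) :
    (tanh v - tanh p) * (v - p) ≤ (tanh p - tanh a) / (p - a) * (v - p) ^ 2 := by
  rcases eq_or_ne v p with rfl | hvp
  · simp
  have hslope : (tanh v - tanh p) / (v - p) ≤ (tanh a - tanh p) / (a - p) := by
    rcases hv.eq_or_lt with rfl | hav
    · exact le_rfl
    exact (strictConcaveOn_tanh.secant_strict_mono (ha.trans hap.le) ha (ha.trans hav.le)
      hap.ne hvp hav).le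
  rw [← neg_div_neg_eq (tanh a - tanh p), neg_sub, neg_sub] at hslope
  calc (tanh v - tanh p) * (v - p) = (tanh v - tanh p) / (v - p) * (v - p) ^ 2 := by
        field_simp [sub_ne_zero.2 hvp]
    _ ≤ (tanh p - tanh a) / (p - a) * (v - p) ^ 2 := by gcongr

theorem Gbeta_add_sq_le {β a p u : ℝ} (hp : tanh p = p / β) (ha : 0 ≤ a) (hap : a < p)
    (hu : a ≤ u) :
    Gbeta β p + (1 / β - (tanh p - tanh a) / (p - a)) * (u - p) ^ 2 ≤ Gbeta β u := by
  set c := 1 / β - (tanh p - tanh a) / (p - a)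
  have hmin := isMinOn_of_hasDerivAt_of_mul_sub_nonneg
    (f := fun u => Gbeta β u - c * (u - p) ^ 2)
    (f' := fun u => 2 * (u / β - tanh u) - c * (2 * (u - p))) ordConnected_Ici (mem_Ici.2 hap.le)
    (fun u _ => by
      refine ((hasDerivAt_Gbeta β u).sub
        ((((hasDerivAt_id' u).sub_const p).pow 2).const_mul c)).congr_deriv ?_
      push_cast
      ring)
    (fun u hu => by
      have hgap : u / β - tanh u = (u - p) / β - (tanh u - tanh p) := by
        rw [hp]
        ring
      have h := tanh_sub_mul_sub_le ha hap hu
      rw [show (tanh p - tanh a) / (p - a) = 1 / β - c by simp only [c, sub_sub_cancel]] at h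
      have e : (2 * ((u - p) / β - (tanh u - tanh p)) - c * (2 * (u - p))) * (u - p) =
          2 * ((1 / β - c) * (u - p) ^ 2 - (tanh u - tanh p) * (u - p)) := by
        ring
      rw [hgap, e]
      linarith)
  have h := isMinOn_iff.1 hmin u hu
  beta_reduce at h
  linarith

theorem integrable_abs_pow_mul_exp_neg_mul_sq (ℓ : ℕ) {b : ℝ} (hb : 0 < b) :
    Integrable fun v : ℝ => |v| ^ ℓ * exp (-b * v ^ 2) := by
  refine (integrable_rpow_mul_exp_neg_mul_sq hb (by linarith [ℓ.cast_nonneg (α := ℝ)] :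
    (-1 : ℝ) < ℓ)).norm.congr (Eventually.of_forall fun v => ?_)
  simp [abs_of_pos (exp_pos _)]

theorem integral_abs_pow_mul_exp_neg_mul_sq (ℓ : ℕ) {b : ℝ} (hb : 0 < b) :
    ∫ v, |v| ^ ℓ * exp (-b * v ^ 2) = (√b)⁻¹ ^ (ℓ + 1) * ∫ w, |w| ^ ℓ * exp (-w ^ 2) := by
  have hsb : 0 < √b := sqrt_pos.2 hb
  have hscale := Measure.integral_comp_mul_left (fun w : ℝ => |w| ^ ℓ * exp (-w ^ 2)) √b
  have e : ∀ v, |√b * v| ^ ℓ * exp (-(√b * v) ^ 2) = √b ^ ℓ * (|v| ^ ℓ * exp (-b * v ^ 2)) := by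
    intro v
    rw [abs_mul, abs_of_pos hsb, mul_pow, mul_pow, sq_sqrt hb.le]
    ring_nf
  simp only [e, integral_const_mul, smul_eq_mul, abs_of_pos (inv_pos.2 hsb)] at hscale
  rw [pow_succ, inv_pow, mul_assoc, ← hscale]
  field_simp

theorem integral_abs_pow_mul_exp_neg_sq_pos (ℓ : ℕ) : 0 < ∫ w, |w| ^ ℓ * exp (-w ^ 2) :=
  integral_pos_of_integrable_nonneg_nonzero (x := 1) (by fun_prop)
    (by simpa using integrable_abs_pow_mul_exp_neg_mul_sq ℓ one_pos)
    (fun w => by positivity) (by simp)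

section Laplace

variable {G : ℝ → ℝ} {p x : ℝ}

theorem setIntegral_abs_pow_mul_exp_le {f : ℝ → ℝ} {S : Set ℝ} {c : ℝ} (hS : MeasurableSet S)
    (hc : 0 < c) (hx : 0 < x) (hf : ∀ u ∈ S, |f u| ≤ |u - p|)
    (hG : ∀ u ∈ S, G p + c * (u - p) ^ 2 ≤ G u) (ℓ : ℕ) :
    ∫ u in S, |f u| ^ ℓ * exp (-(x * G u) / 2) ≤
      exp (-(x * G p) / 2) * ∫ v, |v| ^ ℓ * exp (-(x * c / 2) * v ^ 2) := by
  set E := exp (-(x * G p) / 2)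
  have hint : Integrable fun u => E * (|u - p| ^ ℓ * exp (-(x * c / 2) * (u - p) ^ 2)) :=
    ((integrable_abs_pow_mul_exp_neg_mul_sq ℓ (by positivity)).comp_sub_right p).const_mul E
  have hpt : ∀ u ∈ S, |f u| ^ ℓ * exp (-(x * G u) / 2) ≤
      E * (|u - p| ^ ℓ * exp (-(x * c / 2) * (u - p) ^ 2)) := by
    intro u hu
    have hexp : exp (-(x * G u) / 2) ≤ E * exp (-(x * c / 2) * (u - p) ^ 2) := by
      rw [← exp_add]
      refine exp_le_exp.2 ?_
      nlinarith [mul_le_mul_of_nonneg_left (hG u hu) hx.le]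
    calc |f u| ^ ℓ * exp (-(x * G u) / 2)
        ≤ |u - p| ^ ℓ * (E * exp (-(x * c / 2) * (u - p) ^ 2)) :=
          mul_le_mul (pow_le_pow_left₀ (abs_nonneg _) (hf u hu) ℓ) hexp (exp_pos _).le
            (by positivity)
      _ = E * (|u - p| ^ ℓ * exp (-(x * c / 2) * (u - p) ^ 2)) := by ring
  calc ∫ u in S, |f u| ^ ℓ * exp (-(x * G u) / 2)
      ≤ ∫ u in S, E * (|u - p| ^ ℓ * exp (-(x * c / 2) * (u - p) ^ 2)) :=
        integral_mono_of_nonneg (Eventually.of_forall fun u => by positivity) hint.integrableOn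
          (ae_restrict_of_forall_mem hS hpt)
    _ ≤ ∫ u, E * (|u - p| ^ ℓ * exp (-(x * c / 2) * (u - p) ^ 2)) :=
        setIntegral_le_integral hint (Eventually.of_forall fun u => by positivity)
    _ = E * ∫ v, |v| ^ ℓ * exp (-(x * c / 2) * v ^ 2) := by
        rw [integral_const_mul,
          integral_sub_right_eq_self (fun v => |v| ^ ℓ * exp (-(x * c / 2) * v ^ 2)) p]

theorem le_integral_exp_of_le_add_sq {d : ℝ} (hd : 0 ≤ d) (hx : 0 < x)
    (hint : Integrable fun u => exp (-(x * G u) / 2)) (hG : ∀ u, G u ≤ G p + d * (u - p) ^ 2) :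
    exp (-(d / 2)) * exp (-(x * G p) / 2) * (√x)⁻¹ ≤ ∫ u, exp (-(x * G u) / 2) := by
  have hsx : 0 < √x := sqrt_pos.2 hx
  have hle : ∀ u ∈ Icc p (p + (√x)⁻¹),
      exp (-(d / 2)) * exp (-(x * G p) / 2) ≤ exp (-(x * G u) / 2) := by
    intro u hu
    have hsq : x * (u - p) ^ 2 ≤ 1 := by
      have h := pow_le_pow_left₀ (sub_nonneg.2 hu.1) (sub_le_iff_le_add'.2 hu.2) 2
      rw [inv_pow, sq_sqrt hx.le] at h
      simpa [hx.ne'] using mul_le_mul_of_nonneg_left h hx.le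
    rw [← exp_add]
    refine exp_le_exp.2 ?_
    nlinarith [mul_le_mul_of_nonneg_left (hG u) hx.le, mul_le_mul_of_nonneg_left hsq hd]
  have hvol : volume.real (Icc p (p + (√x)⁻¹)) = (√x)⁻¹ := by
    simp [measureReal_def, Real.volume_Icc, hsx.le]
  calc exp (-(d / 2)) * exp (-(x * G p) / 2) * (√x)⁻¹
      ≤ ∫ u in Icc p (p + (√x)⁻¹), exp (-(x * G u) / 2) := by
        simpa [hvol, mul_comm] using setIntegral_ge_of_const_le_real measurableSet_Icc
          measure_Icc_lt_top.ne hle hint.integrableOn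
    _ ≤ ∫ u, exp (-(x * G u) / 2) :=
        setIntegral_le_integral hint (Eventually.of_forall fun u => (exp_pos _).le)

theorem setIntegral_abs_pow_mul_exp_div_integral_le {f : ℝ → ℝ} {S : Set ℝ} {c d : ℝ}
    (hS : MeasurableSet S) (hc : 0 < c) (hd : 0 ≤ d) (hx : 0 < x)
    (hint : Integrable fun u => exp (-(x * G u) / 2)) (hf : ∀ u ∈ S, |f u| ≤ |u - p|)
    (hGS : ∀ u ∈ S, G p + c * (u - p) ^ 2 ≤ G u) (hG : ∀ u, G u ≤ G p + d * (u - p) ^ 2)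
    (ℓ : ℕ) :
    (∫ u in S, |f u| ^ ℓ * exp (-(x * G u) / 2)) / ∫ u, exp (-(x * G u) / 2) ≤
      exp (d / 2) * (√(c / 2))⁻¹ ^ (ℓ + 1) * (∫ w, |w| ^ ℓ * exp (-w ^ 2)) * (√x)⁻¹ ^ ℓ := by
  have hsx : 0 < √x := sqrt_pos.2 hx
  have hsc : 0 < √(c / 2) := sqrt_pos.2 (by positivity)
  have hnum := setIntegral_abs_pow_mul_exp_le hS hc hx hf hGS ℓ
  rw [integral_abs_pow_mul_exp_neg_mul_sq ℓ (by positivity), mul_div_assoc,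
    sqrt_mul hx.le] at hnum
  calc _ ≤ exp (-(x * G p) / 2) * ((√x * √(c / 2))⁻¹ ^ (ℓ + 1) * ∫ w, |w| ^ ℓ * exp (-w ^ 2)) /
        (exp (-(d / 2)) * exp (-(x * G p) / 2) * (√x)⁻¹) :=
        div_le_div₀ (by positivity) hnum (by positivity)
          (le_integral_exp_of_le_add_sq hd hx hint hG)
    _ = _ := by
        rw [exp_neg, mul_inv, mul_pow, pow_succ (√x)⁻¹]
        field_simp

end Laplace

theorem Zconst_eq_integral (β x : ℝ) : Zconst β x = ∫ u, exp (-(x * Gbeta β u) / 2) := by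
  rw [Zconst, ← tanh_bijOn.image_eq, integral_image_tanh MeasurableSet.univ, Measure.restrict_univ]
  simp only [Fbeta_tanh]

theorem setIntegral_nuN (α β : ℝ) (N : ℕ) {S : Set ℝ} (hS : MeasurableSet S) (f : ℝ → ℝ) :
    ∫ t in S, f t ∂nuN α β N =
      (∫ t in S ∩ Ioo (-1) 1, f t * exp (-((N : ℝ) ^ α * Fbeta β t) / 2) / (1 - t ^ 2)) /
        Zconst β ((N : ℝ) ^ α) := by
  have hZ : 0 ≤ Zconst β ((N : ℝ) ^ α) := setIntegral_nonneg measurableSet_Ioo fun t ht => by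
    have : 0 < 1 - t ^ 2 := by nlinarith [ht.1, ht.2]
    positivity
  rw [nuN, Measure.restrict_smul, integral_smul_measure, ENNReal.toReal_inv,
    ENNReal.toReal_ofReal hZ, smul_eq_mul, inv_mul_eq_div,
    setIntegral_withDensity_eq_setIntegral_toReal_smul' S (by unfold Fbeta; fun_prop)
      (Eventually.of_forall fun _ => ENNReal.ofReal_lt_top),
    Measure.restrict_restrict hS]
  congr 1
  refine setIntegral_congr_fun (hS.inter measurableSet_Ioo) fun t ht => ?_
  have : 0 < 1 - t ^ 2 := by nlinarith [ht.2.1, ht.2.2]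
  rw [ENNReal.toReal_ofReal (by positivity), smul_eq_mul]
  ring

theorem setIntegral_Icc_nuN (α β : ℝ) (N : ℕ) {a : ℝ} (ha : a ∈ Ioo (-1) 1) (f : ℝ → ℝ) :
    ∫ t in Icc a 1, f t ∂nuN α β N =
      (∫ u in Ici (artanh a), f (tanh u) * exp (-((N : ℝ) ^ α * Gbeta β u) / 2)) /
        Zconst β ((N : ℝ) ^ α) := by
  have himage : Icc a 1 ∩ Ioo (-1) 1 = tanh '' Ici (artanh a) := by
    rw [image_tanh_Ici, tanh_artanh ha]
    ext t
    simp only [mem_inter_iff, mem_Icc, mem_Ioo, mem_Ico]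
    constructor
    · rintro ⟨⟨hat, -⟩, -, ht1⟩
      exact ⟨hat, ht1⟩
    · rintro ⟨hat, ht1⟩
      exact ⟨⟨hat, ht1.le⟩, ha.1.trans_le hat, ht1⟩
  rw [setIntegral_nuN α β N measurableSet_Icc, himage, integral_image_tanh measurableSet_Ici]
  simp only [Fbeta_tanh]

theorem inv_sqrt_rpow_pow {y : ℝ} (hy : 0 < y) (α : ℝ) (ℓ : ℕ) :
    (√(y ^ α))⁻¹ ^ ℓ = y ^ (-(α * ℓ) / 2) := by
  rw [sqrt_eq_rpow, ← rpow_neg (rpow_pos_of_pos hy α).le, ← rpow_natCast, ← rpow_mul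
    (rpow_pos_of_pos hy α).le, ← rpow_mul hy.le]
  ring_nf

theorem nuN_moment_bound_general (α β m : ℝ) (hβ : 1 < β)
    (hm : 0 < m) (htanh : Real.tanh (β * m) = m) (ℓ : ℕ) :
    ∃ C > 0, ∀ N : ℕ, 1 ≤ N →
      (∫ t in Set.Icc (m / 2) 1, |t - m| ^ ℓ ∂(nuN α β N)) ≤
        C * (N : ℝ) ^ (-(α * ℓ) / 2) := by
  have hβ0 : 0 < β := by linarith
  have hm1 : m < 1 := htanh ▸ tanh_lt_one _
  have hm2 : m / 2 ∈ Ioo (-1) 1 := ⟨by linarith, by linarith⟩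
  have hp : tanh (β * m) = β * m / β := by rw [htanh]; field_simp
  set p := β * m
  set a := artanh (m / 2)
  have ha : 0 < a := artanh_pos ⟨by linarith, by linarith⟩
  have hap : a < p := tanh_strictMono.lt_iff_lt.1 (by rw [tanh_artanh hm2, htanh]; linarith)
  set c := 1 / β - (tanh p - tanh a) / (p - a)
  have hc : 0 < c := sub_pos.2 (tanh_secant_lt_inv hp ha hap)
  have hM := integral_abs_pow_mul_exp_neg_sq_pos ℓ
  refine ⟨exp (β⁻¹ / 2) * (√(c / 2))⁻¹ ^ (ℓ + 1) * ∫ w, |w| ^ ℓ * exp (-w ^ 2), by positivity,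
    fun N hN => ?_⟩
  have hx : 0 < (N : ℝ) ^ α := rpow_pos_of_pos (by exact_mod_cast hN) α
  rw [setIntegral_Icc_nuN α β N hm2, Zconst_eq_integral,
    ← inv_sqrt_rpow_pow (by exact_mod_cast hN : (0 : ℝ) < N)]
  exact setIntegral_abs_pow_mul_exp_div_integral_le measurableSet_Ici hc (inv_nonneg.2 hβ0.le) hx
    (integrable_exp_neg_mul_Gbeta hβ0 hx) (fun u _ => htanh ▸ abs_tanh_sub_tanh_le u p)
    (fun u hu => Gbeta_add_sq_le hp ha.le hap hu) (Gbeta_le_add_sq hp) ℓ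

/-- For `α > 0`, `β > 1`, every `ℓ ∈ ℕ`: there is `C_ℓ > 0` with
`∫_{m/2}^1 |t-m|^ℓ dν_N(t) ≤ C_ℓ N^{-αℓ/2}` for all `N ≥ 1`. -/
theorem nuN_moment_bound (α β m : ℝ) (hα : 0 < α) (hβ : 1 < β)
    (hm : 0 < m) (htanh : Real.tanh (β * m) = m) (ℓ : ℕ) :
    ∃ C > 0, ∀ N : ℕ, 1 ≤ N →
      (∫ t in Set.Icc (m / 2) 1, |t - m| ^ ℓ ∂(nuN α β N)) ≤
        C * (N : ℝ) ^ (-(α * ℓ) / 2) :=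
  nuN_moment_bound_general α β m hβ hm htanh ℓ
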